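/- Let G be a topological group with group topologies τ (the given one) and σ transversal to τ, and let L be a τ-compact normal subgroup of G. Then there is a σ-open neighborhood V of the identity with V ∩ L = {e}, and hence the quotient topologies on G/L induced by τ and σ are transversal provided both are non-discrete. -/

import Mathlib

/-!
Transversality gives a `τ`-neighborhood `U` and a `σ`-neighborhood `W` of `1` with `U ∩ W = {1}`.
Choosing a `σ`-neighborhood `W'` with `W' / W' ⊆ W`, two distinct points of `W'` never have
quotient in `U`, so `W'` is uniformly discrete for `τ` and meets the `τ`-compact set `L` in
finitely many points. Removing those other than `1` from `W'` leaves, by the `T₁` property of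
`σ`, a `σ`-neighborhood of `1` meeting `L` only in `1`.
-/

open Topology

theorem exists_inter_eq_singleton_of_inf_eq_bot {X : Type*} {t s : TopologicalSpace X}
    (h : t ⊓ s = ⊥) (x : X) : ∃ U ∈ @nhds X t x, ∃ W ∈ @nhds X s x, U ∩ W = {x} := by
  have hx : ({x} : Set X) ∈ @nhds X t x ⊓ @nhds X s x := by
    let _ : TopologicalSpace X := ⊥
    have : DiscreteTopology X := ⟨rfl⟩
    rw [← nhds_inf, h, nhds_discrete]
    exact Filter.mem_pure.mpr rfl
  obtain ⟨U, hU, W, hW, hUW⟩ := Filter.mem_inf_iff.mp hx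
  exact ⟨U, hU, W, hW, hUW.symm⟩

theorem IsCompact.finite_inter_of_div_mem {G : Type*} [TopologicalSpace G] [Group G]
    [IsTopologicalGroup G] {K S U : Set G} (hK : IsCompact K) (hU : U ∈ 𝓝 1)
    (hS : ∀ a ∈ S, ∀ b ∈ S, a / b ∈ U → a = b) : (K ∩ S).Finite := by
  obtain ⟨V, hV, hVU⟩ := exists_nhds_split_inv hU
  have hnhds (x : G) : (· / x) ⁻¹' V ∈ 𝓝 x :=
    (continuous_id.div_const x).continuousAt.preimage_mem_nhds (by simpa using hV)
  obtain ⟨t, -, hKt⟩ := hK.elim_nhds_subcover _ fun x _ ↦ hnhds x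
  have hsub (x : G) : ((· / x) ⁻¹' V ∩ S).Subsingleton := by
    rintro a ⟨ha, haS⟩ b ⟨hb, hbS⟩
    exact hS a haS b hbS (by simpa using hVU _ ha _ hb)
  refine (t.finite_toSet.biUnion fun x _ ↦ (hsub x).finite).subset ?_
  rintro a ⟨haK, haS⟩
  obtain ⟨x, hx, hax⟩ := Set.mem_iUnion₂.mp (hKt haK)
  exact Set.mem_iUnion₂.mpr ⟨x, hx, hax, haS⟩

theorem exists_isOpen_inter_eq_singleton_of_finite {X : Type*} [TopologicalSpace X] [T1Space X]
    {x : X} {s L : Set X} (hs : s ∈ 𝓝 x) (hfin : (s ∩ L).Finite) (hx : x ∈ L) :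
    ∃ V : Set X, IsOpen V ∧ x ∈ V ∧ V ∩ L = {x} := by
  have hV₀ : s ∩ ((s ∩ L) \ {x})ᶜ ∈ 𝓝 x :=
    Filter.inter_mem hs ((hfin.sdiff).isClosed.compl_mem_nhds (by simp))
  obtain ⟨V, hVV₀, hVo, hxV⟩ := mem_nhds_iff.mp hV₀
  refine ⟨V, hVo, hxV, Set.Subset.antisymm ?_ (by simpa using ⟨hxV, hx⟩)⟩
  rintro y ⟨hyV, hyL⟩
  by_contra hyx
  exact (hVV₀ hyV).2 ⟨⟨(hVV₀ hyV).1, hyL⟩, hyx⟩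

theorem stmt_12_general {G : Type*} [Group G] (τ σ : TopologicalSpace G)
    (hτ : @IsTopologicalGroup G τ _) (hσ : @IsTopologicalGroup G σ _)
    (hσ2 : @T2Space G σ)
    (htrans : τ ⊓ σ = ⊥)
    (L : Subgroup G) (hL : @IsCompact G τ (L : Set G)) :
    ∃ V : Set G, @IsOpen G σ V ∧ (1 : G) ∈ V ∧ V ∩ (L : Set G) = {1} := by
  obtain ⟨U, hU, W, hW, hUW⟩ := exists_inter_eq_singleton_of_inf_eq_bot htrans 1
  let _ := σ
  obtain ⟨W', hW', hW'W⟩ := exists_nhds_split_inv hW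
  have hsep : ∀ a ∈ W', ∀ b ∈ W', a / b ∈ U → a = b := fun a ha b hb habU ↦
    div_eq_one.mp (hUW.subset ⟨habU, hW'W a ha b hb⟩)
  have hfin : (W' ∩ L).Finite := by
    rw [Set.inter_comm]
    exact @IsCompact.finite_inter_of_div_mem G τ _ hτ _ _ _ hL hU hsep
  exact exists_isOpen_inter_eq_singleton_of_finite hW' hfin L.one_mem

/-- Let `τ`, `σ` be transversal (non-discrete Hausdorff, with discrete join, i.e.
`τ ⊓ σ = ⊥` in Mathlib's order) group topologies on `G` and `L` a `τ`-compact
subgroup. Then there is a `σ`-open neighborhood `V` of the identity with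
`V ∩ L = {1}`. -/
theorem stmt_12 {G : Type*} [Group G] (τ σ : TopologicalSpace G)
    (hτ : @IsTopologicalGroup G τ _) (hσ : @IsTopologicalGroup G σ _)
    (hτ2 : @T2Space G τ) (hσ2 : @T2Space G σ)
    (hτnd : τ ≠ ⊥) (hσnd : σ ≠ ⊥) (htrans : τ ⊓ σ = ⊥)
    (L : Subgroup G) (hL : @IsCompact G τ (L : Set G)) :
    ∃ V : Set G, @IsOpen G σ V ∧ (1 : G) ∈ V ∧ V ∩ (L : Set G) = {1} :=
  stmt_12_general τ σ hτ hσ hσ2 htrans L hL
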